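/- For σ ≥ 0 and ρ ∈ (0, 1], let 𝒢(x, y, z, σ, ρ) := g(x, σ, ρ)·( f_WM(x, ρ) − f_SF(x, y, z, ρ) ). Then ρ times the partial derivative of 𝒢 with respect to z, evaluated at the profile values x = U(ρ), y = U′(ρ) − U(ρ)/ρ, z = ρ·U′(ρ), equals 50(1 − ρ²)(5 + 3ρ²) / ( (5 − ρ²) · (64(5 − ρ²) + σ²(5 + 3ρ²)²) ). -/

import Mathlib

open Real Set

/-- The blowup profile `U(ρ) = 2 arctan(2ρ/√(5-ρ²))`. -/
noncomputable def U (ρ : ℝ) : ℝ := 2 * Real.arctan (2 * ρ / Real.sqrt (5 - ρ ^ 2))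

/-- The strong field nonlinearity `f_SF`. -/
noncomputable def fSF (x y z r : ℝ) : ℝ :=
  -(1 / r) * Real.cot x * (z ^ 2 - y ^ 2) - (2 / r ^ 2) * (1 - x * Real.cot x) * y
    - ((3 / 2) * Real.sin (2 * x) - 2 * x - x ^ 2 * Real.cot x) / r ^ 3

/-- The wave maps nonlinearity `f_WM`. -/
noncomputable def fWM (x r : ℝ) : ℝ := (4 * x - 2 * Real.sin (2 * x)) / r ^ 3

/-- The multiplier `g(x,σ,r) = (σ² + 4sin²(x)/r²)⁻¹`. -/
noncomputable def gMult (x σ r : ℝ) : ℝ := (σ ^ 2 + 4 * Real.sin x ^ 2 / r ^ 2)⁻¹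

/-- The full nonlinearity `𝒢(x,y,z,σ,ρ)`. -/
noncomputable def Gfull (x y z σ ρ : ℝ) : ℝ := gMult x σ ρ * (fWM x ρ - fSF x y z ρ)



lemma sin_two_arctan (t : ℝ) : Real.sin (2 * Real.arctan t) = 2 * t / (1 + t ^ 2) := by
  rw [Real.sin_two_mul, Real.sin_arctan, Real.cos_arctan]
  have h : Real.sqrt (1 + t ^ 2) ^ 2 = 1 + t ^ 2 := Real.sq_sqrt (by positivity)
  have hp : 0 < Real.sqrt (1 + t ^ 2) := Real.sqrt_pos.mpr (by positivity)
  field_simp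
  linear_combination (-t) * h

lemma cos_two_arctan (t : ℝ) : Real.cos (2 * Real.arctan t) = (1 - t ^ 2) / (1 + t ^ 2) := by
  rw [Real.cos_two_mul, Real.cos_arctan]
  have h : Real.sqrt (1 + t ^ 2) ^ 2 = 1 + t ^ 2 := Real.sq_sqrt (by positivity)
  have hp : 0 < Real.sqrt (1 + t ^ 2) := Real.sqrt_pos.mpr (by positivity)
  field_simp
  linear_combination (-2) * h

section
variable {ρ : ℝ} (h0 : 0 < ρ) (h1 : ρ ≤ 1)

lemma sq5 (h0 : 0 < ρ) (h1 : ρ ≤ 1) : Real.sqrt (5 - ρ ^ 2) ^ 2 = 5 - ρ ^ 2 :=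
  Real.sq_sqrt (by nlinarith)

lemma s5pos (h0 : 0 < ρ) (h1 : ρ ≤ 1) : 0 < Real.sqrt (5 - ρ ^ 2) :=
  Real.sqrt_pos.mpr (by nlinarith)

lemma sinU (h0 : 0 < ρ) (h1 : ρ ≤ 1) :
    Real.sin (U ρ) = 4 * ρ * Real.sqrt (5 - ρ ^ 2) / (5 + 3 * ρ ^ 2) := by
  have hs2 := sq5 h0 h1
  have hs0 := s5pos h0 h1
  set s := Real.sqrt (5 - ρ ^ 2)
  rw [U, sin_two_arctan]
  have h53 : (0:ℝ) < 5 + 3 * ρ ^ 2 := by positivity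
  have hden : 1 + (2 * ρ / s) ^ 2 ≠ 0 := by positivity
  field_simp
  rw [show Real.sqrt (5 - ρ ^ 2) = s from rfl]
  field_simp
  linear_combination (-4) * hs2

lemma cosU (h0 : 0 < ρ) (h1 : ρ ≤ 1) :
    Real.cos (U ρ) = 5 * (1 - ρ ^ 2) / (5 + 3 * ρ ^ 2) := by
  have hs2 := sq5 h0 h1
  have hs0 := s5pos h0 h1
  set s := Real.sqrt (5 - ρ ^ 2)
  rw [U, cos_two_arctan]
  field_simp
  rw [show Real.sqrt (5 - ρ ^ 2) = s from rfl]
  field_simp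
  linear_combination (8 * ρ ^ 2) * hs2

lemma derivU (h0 : 0 < ρ) (h1 : ρ ≤ 1) :
    HasDerivAt U (20 / (Real.sqrt (5 - ρ ^ 2) * (5 + 3 * ρ ^ 2))) ρ := by
  have hs2 := sq5 h0 h1
  have hs0 := s5pos h0 h1
  set s := Real.sqrt (5 - ρ ^ 2) with hsdef
  have hin : HasDerivAt (fun x : ℝ => 5 - x ^ 2) (-(2 * ρ)) ρ := by
    simpa using (hasDerivAt_pow 2 ρ).const_sub 5
  have hsq : HasDerivAt (fun x : ℝ => Real.sqrt (5 - x ^ 2)) (-(2 * ρ) / (2 * s)) ρ :=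
    hin.sqrt (by nlinarith)
  have hnum : HasDerivAt (fun x : ℝ => 2 * x) 2 ρ := by
    simpa using (hasDerivAt_id ρ).const_mul 2
  have hq : HasDerivAt (fun x : ℝ => 2 * x / Real.sqrt (5 - x ^ 2))
      ((2 * s - 2 * ρ * (-(2 * ρ) / (2 * s))) / s ^ 2) ρ := hnum.div hsq hs0.ne'
  have harc := (Real.hasDerivAt_arctan (2 * ρ / s)).comp ρ hq
  have hU : HasDerivAt U
      (2 * (1 / (1 + (2 * ρ / s) ^ 2) * ((2 * s - 2 * ρ * (-(2 * ρ) / (2 * s))) / s ^ 2))) ρ := by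
    unfold U
    exact harc.const_mul 2
  convert hU using 1
  have h53 : (0:ℝ) < 5 + 3 * ρ ^ 2 := by positivity
  field_simp
  linear_combination (-12 * ρ ^ 2) * hs2

end

theorem first_order_coefficient_z :
    ∀ σ ρ : ℝ, 0 ≤ σ → 0 < ρ → ρ ≤ 1 →
      ∃ D : ℝ,
        HasDerivAt (fun z => Gfull (U ρ) (deriv U ρ - U ρ / ρ) z σ ρ) D (ρ * deriv U ρ) ∧
        ρ * D = 50 * (1 - ρ ^ 2) * (5 + 3 * ρ ^ 2) /
          ((5 - ρ ^ 2) * (64 * (5 - ρ ^ 2) + σ ^ 2 * (5 + 3 * ρ ^ 2) ^ 2)) := by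
  intro σ ρ hσ h0 h1
  have hs2 := sq5 h0 h1
  have hs0 := s5pos h0 h1
  set s := Real.sqrt (5 - ρ ^ 2) with hsdef
  have h53 : (0:ℝ) < 5 + 3 * ρ ^ 2 := by positivity
  have hsin : Real.sin (U ρ) = 4 * ρ * s / (5 + 3 * ρ ^ 2) := sinU h0 h1
  have hcos : Real.cos (U ρ) = 5 * (1 - ρ ^ 2) / (5 + 3 * ρ ^ 2) := cosU h0 h1
  have hdU : deriv U ρ = 20 / (s * (5 + 3 * ρ ^ 2)) := (derivU h0 h1).deriv
  set z0 := ρ * deriv U ρ with hz0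
  set x := U ρ
  set y := deriv U ρ - U ρ / ρ
  set g0 := gMult x σ ρ with hg0
  set C : ℝ := g0 * (fWM x ρ - (-(1 / ρ) * Real.cot x * (-(y ^ 2)) -
      (2 / ρ ^ 2) * (1 - x * Real.cot x) * y
      - ((3 / 2) * Real.sin (2 * x) - 2 * x - x ^ 2 * Real.cot x) / ρ ^ 3)) with hC
  refine ⟨g0 * ((1 / ρ) * Real.cot x) * (2 * z0), ?_, ?_⟩
  · have hfun : (fun z => Gfull x y z σ ρ) =
        fun z => g0 * ((1 / ρ) * Real.cot x) * z ^ 2 + C := by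
      funext z
      simp only [Gfull, fSF, hg0, hC]
      ring
    rw [hfun]
    have h := ((hasDerivAt_pow 2 z0).const_mul (g0 * ((1 / ρ) * Real.cot x))).add_const C
    refine h.congr_deriv ?_
    push_cast
    ring
  · have hsinpos : 0 < Real.sin x := by
      rw [hsin]
      exact div_pos (by positivity) h53
    have hcot : Real.cot x = 5 * (1 - ρ ^ 2) / (4 * ρ * s) := by
      rw [Real.cot_eq_cos_div_sin, hsin, hcos]
      rw [div_div_div_eq]
      field_simp
    have hgval : g0 = (5 + 3 * ρ ^ 2) ^ 2 /
        (σ ^ 2 * (5 + 3 * ρ ^ 2) ^ 2 + 64 * (5 - ρ ^ 2)) := by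
      have hden : (0:ℝ) < σ ^ 2 * (5 + 3 * ρ ^ 2) ^ 2 + 64 * (5 - ρ ^ 2) := by nlinarith
      rw [hg0, gMult, hsin]
      rw [inv_eq_iff_eq_inv, inv_div]
      field_simp
      linear_combination 64 * hs2
    rw [hz0, hdU, hcot, hgval]
    have hden : (0:ℝ) < σ ^ 2 * (5 + 3 * ρ ^ 2) ^ 2 + 64 * (5 - ρ ^ 2) := by nlinarith
    have h5 : (0:ℝ) < 5 - ρ ^ 2 := by nlinarith
    field_simp
    ring_nf
    linear_combination (-200 * (1 - ρ ^ 2) * (64 * (5 - ρ ^ 2) + (5 + ρ ^ 2 * 3) ^ 2 * σ ^ 2)) * hs2
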